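/- arXiv:0911.4462 — 2 statements merged into one kernel-verified Lean document; each statement's English description precedes it below -/
import Mathlib

section
/- Let B⁰ = (b⁰_{ij}) be an n×n integer matrix with b⁰_{ij} = 0 for |i−j| ≠ 1, b⁰_{i,i+1} = −b⁰_{i+1,i} ∈ {1,−1} for 1 ≤ i ≤ n−2, and b⁰_{n−1,n} ∈ {1,−1} with b⁰_{n,n−1} = −2·b⁰_{n−1,n} (an exchange matrix of type B_n), and let Q⁰ be the quiver with an arrow i→j whenever b⁰_{ji} > 0. Let δ = (2,…,2,1) ∈ ℤ^n, let d be a positive integer, let r ∈ {1,…,n}, and set d'' = e_r+⋯+e_n. Define g_{d''} = −Σ_i d''_i e_i + Σ_{i,j} d''_i[−b⁰_{ji}]_+ e_j ∈ ℤ^n; for x,y,z ∈ ℤ^n write x·y·z = Σ_i x_i y_i z_i; let ⟨·,·⟩ be the bilinear form on ℤ^n with ⟨e_i, e_j⟩ = d·sgn(b⁰_{ij}); and set ψ̃(v,w) = −(d/2)(δ·g_{d''}·v) − (3d/2)(δ·g_{d''}·w) + ⟨v,w⟩. Fix a ∈ ℤ^n, let S_a be the set of pairs (v,w) with v+w = a,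 0 ≤ v ≤ d'', 0 ≤ w ≤ d'', and every arrow of Q⁰ acceptable with respect to (d'', v) and with respect to (d'', w), and let S be the induced subgraph of Q⁰ on {i : a_i = 1}. Let [s₁, s₂] be a connected component of S, let (v,w) ∈ S_a satisfy v_i = 1 for all i ∈ [s₁, s₂], and set a' = Σ_{i=s₁}^{s₂} e_i. Then ψ̃(v − a', w + a') = ψ̃(v,w) + 2d if s₂ < n, and ψ̃(v − a', w + a') = ψ̃(v,w) + d if s₂ = n. -/
/-- The quiver of the matrix `b` on vertices `{1, …, n}`: arrow `i → j` iff `b_{ji} > 0`. -/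
def Arr (n : ℕ) (b : ℕ → ℕ → ℤ) (i j : ℕ) : Prop :=
  1 ≤ i ∧ i ≤ n ∧ 1 ≤ j ∧ j ≤ n ∧ 0 < b j i

/-- Every arrow of the quiver of `b` is acceptable with respect to `(d, e)`. -/
def AcceptableAll (n : ℕ) (b : ℕ → ℕ → ℤ) (d e : ℕ → ℤ) : Prop :=
  ∀ i j, Arr n b i j → e i - e j ≤ max (d i - d j) 0

/-- The `g`-vector `g_c = −Σ_i c_i e_i + Σ_{i,j} c_i [−b_{ji}]₊ e_j` of `c`. -/
def gvec (n : ℕ) (b : ℕ → ℕ → ℤ) (c : ℕ → ℤ) : ℕ → ℤ :=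
  fun j => -c j + ∑ i ∈ Finset.Icc 1 n, c i * max (-b j i) 0

/-- `x·y·z = Σ_i x_i y_i z_i`. -/
def dot3 (n : ℕ) (x y z : ℕ → ℤ) : ℤ := ∑ i ∈ Finset.Icc 1 n, x i * y i * z i

/-- The vector `δ = (2, …, 2, 1)` of type `B_n`. -/
def deltaB (n : ℕ) : ℕ → ℤ := fun i => if i = n then 1 else 2

/-- The bilinear form with `⟨e_i, e_j⟩ = d·sgn(b_{ij})`. -/
def formB (n : ℕ) (d : ℤ) (b : ℕ → ℕ → ℤ) (v w : ℕ → ℤ) : ℤ :=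
  ∑ i ∈ Finset.Icc 1 n, ∑ j ∈ Finset.Icc 1 n, v i * w j * (d * Int.sign (b i j))

/-- `ψ̃(v,w) = −(d/2)(δ·g·v) − (3d/2)(δ·g·w) + ⟨v,w⟩`, with values in `(1/2)ℤ ⊆ ℚ`. -/
def psiB (n : ℕ) (d : ℤ) (b : ℕ → ℕ → ℤ) (g : ℕ → ℤ) (v w : ℕ → ℤ) : ℚ :=
  -((d : ℚ) / 2) * (dot3 n (deltaB n) g v : ℚ) -
    (3 * (d : ℚ) / 2) * (dot3 n (deltaB n) g w : ℚ) + (formB n d b v w : ℚ)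

private lemma sum_support_pair (s : Finset ℕ) (f : ℕ → ℤ) (j₁ j₂ : ℕ)
    (hne : j₁ ≠ j₂) (h : ∀ i ∈ s, i ≠ j₁ → i ≠ j₂ → f i = 0) :
    ∑ i ∈ s, f i = (if j₁ ∈ s then f j₁ else 0) + (if j₂ ∈ s then f j₂ else 0) := by
  have step : ∀ i ∈ s, f i = (if i = j₁ then f j₁ else 0) + (if i = j₂ then f j₂ else 0) := by
    intro i hi
    by_cases h1 : i = j₁
    · subst h1; rw [if_pos rfl, if_neg hne, add_zero]
    · by_cases h2 : i = j₂
      · subst h2; rw [if_neg h1, if_pos rfl, zero_add]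
      · rw [if_neg h1, if_neg h2, add_zero]; exact h i hi h1 h2
  rw [Finset.sum_congr rfl step, Finset.sum_add_distrib,
    Finset.sum_ite_eq' s j₁ (fun _ => f j₁), Finset.sum_ite_eq' s j₂ (fun _ => f j₂)]

private lemma sum_tridiag (n : ℕ) (F : ℕ → ℕ → ℤ)
    (h : ∀ i ∈ Finset.Icc 1 n, ∀ j ∈ Finset.Icc 1 n, j ≠ i + 1 → i ≠ j + 1 → F i j = 0) :
    ∑ i ∈ Finset.Icc 1 n, ∑ j ∈ Finset.Icc 1 n, F i j
      = ∑ k ∈ Finset.Icc 1 (n - 1), (F k (k + 1) + F (k + 1) k) := by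
  have inner : ∀ i ∈ Finset.Icc 1 n, (∑ j ∈ Finset.Icc 1 n, F i j)
      = (if i + 1 ∈ Finset.Icc 1 n then F i (i + 1) else 0)
      + (if i - 1 ∈ Finset.Icc 1 n then F i (i - 1) else 0) := by
    intro i hi
    rw [Finset.mem_Icc] at hi
    apply sum_support_pair _ _ _ _ (by omega)
    intro j hj h1 h2
    rw [Finset.mem_Icc] at hj
    exact h i (by rw [Finset.mem_Icc]; omega) j (by rw [Finset.mem_Icc]; omega) h1 (by omega)
  rw [Finset.sum_congr rfl inner, Finset.sum_add_distrib]
  have e1 : (∑ i ∈ Finset.Icc 1 n, if i + 1 ∈ Finset.Icc 1 n then F i (i + 1) else 0)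
      = ∑ k ∈ Finset.Icc 1 (n - 1), F k (k + 1) := by
    have h1 : ∀ i ∈ Finset.Icc 1 n, (if i + 1 ∈ Finset.Icc 1 n then F i (i + 1) else 0)
        = (if i ∈ Finset.Icc 1 (n - 1) then F i (i + 1) else 0) := by
      intro i hi; rw [Finset.mem_Icc] at hi; simp only [Finset.mem_Icc]
      exact if_congr (by omega) rfl rfl
    rw [Finset.sum_congr rfl h1, Finset.sum_ite_mem,
      Finset.inter_eq_right.mpr (fun x hx => by rw [Finset.mem_Icc] at *; omega)]
  have e2 : (∑ i ∈ Finset.Icc 1 n, if i - 1 ∈ Finset.Icc 1 n then F i (i - 1) else 0)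
      = ∑ k ∈ Finset.Icc 1 (n - 1), F (k + 1) k := by
    have h1 : ∀ i ∈ Finset.Icc 1 n, (if i - 1 ∈ Finset.Icc 1 n then F i (i - 1) else 0)
        = (if i ∈ Finset.Icc 2 n then F i (i - 1) else 0) := by
      intro i hi; rw [Finset.mem_Icc] at hi; simp only [Finset.mem_Icc]
      exact if_congr (by omega) rfl rfl
    rw [Finset.sum_congr rfl h1, Finset.sum_ite_mem,
      Finset.inter_eq_right.mpr (fun x hx => by rw [Finset.mem_Icc] at *; omega)]
    have hmap : Finset.Icc 2 n = (Finset.Icc 1 (n - 1)).map ⟨fun k => k + 1, add_left_injective 1⟩ := by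
      ext x
      simp only [Finset.mem_map, Finset.mem_Icc, Function.Embedding.coeFn_mk]
      constructor
      · intro hx; exact ⟨x - 1, by omega, by omega⟩
      · rintro ⟨k, hk, rfl⟩; omega
    rw [hmap, Finset.sum_map]
    refine Finset.sum_congr rfl fun k hk => ?_
    simp only [Function.Embedding.coeFn_mk, Nat.add_sub_cancel]
  rw [e1, e2, ← Finset.sum_add_distrib]

/-- Type `B_n`: the effect on `ψ̃` of moving a component `[s₁, s₂]` of `S` from `v`
to `w`:  `ψ̃(v − a', w + a') = ψ̃(v, w) + 2d` if `s₂ < n`, and `= ψ̃(v, w) + d` if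
`s₂ = n`. -/
theorem stmt_16 (n : ℕ) (hn : 2 ≤ n) (b : ℕ → ℕ → ℤ)
    (hb0 : ∀ i, 1 ≤ i → i ≤ n → ∀ j, 1 ≤ j → j ≤ n → j ≠ i + 1 → i ≠ j + 1 → b i j = 0)
    (hb1 : ∀ i, 1 ≤ i → i ≤ n - 2 →
      (b i (i + 1) = 1 ∨ b i (i + 1) = -1) ∧ b (i + 1) i = -b i (i + 1))
    (hb2 : (b (n - 1) n = 1 ∨ b (n - 1) n = -1) ∧ b n (n - 1) = -2 * b (n - 1) n)
    (d : ℤ) (hd : 0 < d)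
    (r : ℕ) (hr1 : 1 ≤ r) (hrn : r ≤ n)
    (d'' : ℕ → ℤ) (hd'' : ∀ i, d'' i = if r ≤ i ∧ i ≤ n then 1 else 0)
    (a v w : ℕ → ℤ)
    (hvw : ∀ i, v i + w i = a i)
    (hv : ∀ i, 0 ≤ v i ∧ v i ≤ d'' i) (hw : ∀ i, 0 ≤ w i ∧ w i ≤ d'' i)
    (hav : AcceptableAll n b d'' v) (haw : AcceptableAll n b d'' w)
    (s₁ s₂ : ℕ) (hs₁ : 1 ≤ s₁) (hs₁₂ : s₁ ≤ s₂) (hs₂ : s₂ ≤ n)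
    (hS : ∀ i, s₁ ≤ i → i ≤ s₂ → a i = 1)
    (hleft : s₁ = 1 ∨ a (s₁ - 1) ≠ 1)
    (hright : s₂ = n ∨ a (s₂ + 1) ≠ 1)
    (hv1 : ∀ i, s₁ ≤ i → i ≤ s₂ → v i = 1)
    (a' : ℕ → ℤ) (ha' : ∀ i, a' i = if s₁ ≤ i ∧ i ≤ s₂ then 1 else 0) :
    (s₂ < n →
      psiB n d b (gvec n b d'') (fun i => v i - a' i) (fun i => w i + a' i) =
        psiB n d b (gvec n b d'') v w + 2 * (d : ℚ)) ∧
    (s₂ = n →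
      psiB n d b (gvec n b d'') (fun i => v i - a' i) (fun i => w i + a' i) =
        psiB n d b (gvec n b d'') v w + (d : ℚ)) := by
  have hs₁n : s₁ ≤ n := le_trans hs₁₂ hs₂
  have hrs : r ≤ s₁ := by
    by_contra hcon
    have h1 := (hv s₁).2
    rw [hv1 s₁ le_rfl hs₁₂, hd'' s₁, if_neg (by omega : ¬(r ≤ s₁ ∧ s₁ ≤ n))] at h1
    omega
  have hd1 : ∀ i, r ≤ i → i ≤ n → d'' i = 1 := fun i h1 h2 => by
    rw [hd'' i, if_pos ⟨h1, h2⟩]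
  have hwS : ∀ i, s₁ ≤ i → i ≤ s₂ → w i = 0 := by
    intro i h1 h2
    have e1 := hvw i; have e2 := hS i h1 h2; have e3 := hv1 i h1 h2; omega
  -- adjacent pairs of the matrix
  have hpairs : ∀ k, 1 ≤ k → k + 1 ≤ n →
      (b k (k + 1) = 1 ∨ b k (k + 1) = -1) ∧
      ((k + 1 < n ∧ b (k + 1) k = -b k (k + 1)) ∨
        (k + 1 = n ∧ b (k + 1) k = -2 * b k (k + 1))) := by
    intro k h1 h2
    by_cases hc : k + 1 = n
    · have hk : k = n - 1 := by omega
      subst hk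
      constructor
      · rw [hc]; exact hb2.1
      · right; refine ⟨hc, ?_⟩; rw [hc]; exact hb2.2
    · have h3 := hb1 k h1 (by omega)
      exact ⟨h3.1, Or.inl ⟨by omega, h3.2⟩⟩
  have hsgn : ∀ k, 1 ≤ k → k + 1 ≤ n →
      Int.sign (b (k + 1) k) = -Int.sign (b k (k + 1)) := by
    intro k h1 h2
    obtain ⟨he, hrel⟩ := hpairs k h1 h2
    rcases he with he | he <;> rcases hrel with ⟨_, hb⟩ | ⟨_, hb⟩ <;> rw [hb, he] <;> decide
  -- the g-vector on [r, n]
  have hg : ∀ j, r ≤ j → j ≤ n → gvec n b d'' j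
      = -1 + ((if j + 1 ≤ n then max (-(b j (j + 1))) 0 else 0)
             + (if r + 1 ≤ j then max (-(b j (j - 1))) 0 else 0)) := by
    intro j hj1 hj2
    unfold gvec
    rw [sum_support_pair _ _ (j + 1) (j - 1) (by omega)
        (fun i hi h1 h2 => by
          rw [Finset.mem_Icc] at hi
          rw [hb0 j (by omega) hj2 i hi.1 hi.2 h1 (by omega), neg_zero, max_self, mul_zero]),
      hd1 j hj1 hj2]
    simp only [Finset.mem_Icc, hd'']
    split_ifs <;> first | ring1 | (exfalso; omega)
  -- reduce G to a sum over [s₁, s₂]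
  have hG1 : dot3 n (deltaB n) (gvec n b d'') a'
      = ∑ j ∈ Finset.Icc s₁ s₂, deltaB n j * gvec n b d'' j := by
    unfold dot3
    have h1 : ∀ j ∈ Finset.Icc 1 n, deltaB n j * gvec n b d'' j * a' j
        = if j ∈ Finset.Icc s₁ s₂ then deltaB n j * gvec n b d'' j else 0 := by
      intro j hj
      rw [ha' j]
      simp only [Finset.mem_Icc]
      split_ifs with h
      · rw [mul_one]
      · rw [mul_zero]
    rw [Finset.sum_congr rfl h1, Finset.sum_ite_mem,
      Finset.inter_eq_right.mpr (fun x hx => by rw [Finset.mem_Icc] at *; omega)]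
  -- the key telescoping computation
  have hG2 : ∀ m, s₁ ≤ m → m ≤ n →
      (∑ j ∈ Finset.Icc s₁ m, deltaB n j * gvec n b d'' j)
        = (if r + 1 ≤ s₁ then deltaB n s₁ * max (-(b s₁ (s₁ - 1))) 0 else 0)
          + (if m = n then -1 else -2 + 2 * max (-(b m (m + 1))) 0) := by
    intro m hm
    induction m, hm using Nat.le_induction with
    | base =>
      intro hn'
      rw [Finset.Icc_self, Finset.sum_singleton, hg s₁ hrs hn']
      by_cases hcase : s₁ = n
      · rw [if_pos hcase, if_neg (show ¬(s₁ + 1 ≤ n) by omega),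
          show deltaB n s₁ = 1 from by simp only [deltaB]; rw [if_pos hcase]]
        split_ifs <;> ring
      · rw [if_neg hcase, if_pos (show s₁ + 1 ≤ n by omega),
          show deltaB n s₁ = 2 from by simp only [deltaB]; rw [if_neg hcase]]
        split_ifs <;> ring
    | succ m hm ih =>
      intro hm1
      obtain ⟨he, hrel⟩ := hpairs m (by omega) (by omega)
      rw [Finset.sum_Icc_succ_top (by omega : s₁ ≤ m + 1), ih (by omega),
        if_neg (show ¬ m = n by omega), hg (m + 1) (by omega) hm1,
        if_pos (show r + 1 ≤ m + 1 by omega), Nat.add_sub_cancel]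
      by_cases hc : m + 1 = n
      · rw [if_pos hc, if_neg (show ¬ m + 1 + 1 ≤ n by omega),
          show deltaB n (m + 1) = 1 from by simp only [deltaB]; rw [if_pos hc]]
        rcases hrel with ⟨h, _⟩ | ⟨_, hb⟩
        · omega
        · rcases he with he | he
          · have h2 : max (-(b m (m + 1))) 0 = 0 := by rw [he]; decide
            have h1 : max (-(b (m + 1) m)) 0 = 2 := by rw [hb, he]; decide
            rw [h2, h1]; ring
          · have h2 : max (-(b m (m + 1))) 0 = 1 := by rw [he]; decide
            have h1 : max (-(b (m + 1) m)) 0 = 0 := by rw [hb, he]; decide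
            rw [h2, h1]; ring
      · rw [if_neg hc, if_pos (show m + 1 + 1 ≤ n by omega),
          show deltaB n (m + 1) = 2 from by simp only [deltaB]; rw [if_neg hc]]
        rcases hrel with ⟨_, hb⟩ | ⟨h, _⟩
        · rcases he with he | he
          · have h2 : max (-(b m (m + 1))) 0 = 0 := by rw [he]; decide
            have h1 : max (-(b (m + 1) m)) 0 = 1 := by rw [hb, he]; decide
            rw [h2, h1]; ring
          · have h2 : max (-(b m (m + 1))) 0 = 1 := by rw [he]; decide
            have h1 : max (-(b (m + 1) m)) 0 = 0 := by rw [hb, he]; decide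
            rw [h2, h1]; ring
        · omega
  -- left boundary
  have hL : (if 2 ≤ s₁ then Int.sign (b (s₁ - 1) s₁) * a (s₁ - 1) else 0)
      = (if r + 1 ≤ s₁ then deltaB n s₁ * max (-(b s₁ (s₁ - 1))) 0 else 0) := by
    by_cases hcr : r + 1 ≤ s₁
    · rw [if_pos hcr, if_pos (show 2 ≤ s₁ by omega)]
      have ht1 : (1:ℕ) ≤ s₁ - 1 := by omega
      have ht2 : s₁ - 1 + 1 = s₁ := by omega
      obtain ⟨he, hrel⟩ := hpairs (s₁ - 1) ht1 (by omega)
      rw [ht2] at he hrel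
      have hds₁ : d'' s₁ = 1 := hd1 s₁ (by omega) hs₁n
      have hdt : d'' (s₁ - 1) = 1 := hd1 (s₁ - 1) (by omega) (by omega)
      have hnotleft : a (s₁ - 1) ≠ 1 := by
        rcases hleft with h | h
        · omega
        · exact h
      have hvt := hv (s₁ - 1); have hwt := hw (s₁ - 1)
      rw [hdt] at hvt hwt
      have hvwt := hvw (s₁ - 1)
      have hv1s := hv1 s₁ le_rfl hs₁₂
      rcases he with he | he
      · have harr : Arr n b s₁ (s₁ - 1) :=
          ⟨hs₁, hs₁n, ht1, by omega, by rw [he]; norm_num⟩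
        have hacc := hav s₁ (s₁ - 1) harr
        rw [hds₁, hdt] at hacc
        norm_num at hacc
        have ha2 : a (s₁ - 1) = 2 := by omega
        rw [ha2, he]
        rcases hrel with ⟨hlt, hb⟩ | ⟨heqn, hb⟩
        · have hm : max (-(b s₁ (s₁ - 1))) 0 = 1 := by rw [hb, he]; decide
          rw [hm, show deltaB n s₁ = 2 from by simp only [deltaB]; rw [if_neg (by omega)]]
          decide
        · have hm : max (-(b s₁ (s₁ - 1))) 0 = 2 := by rw [hb, he]; decide
          rw [hm, show deltaB n s₁ = 1 from by simp only [deltaB]; rw [if_pos heqn]]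
          decide
      · have hbpos : 0 < b s₁ (s₁ - 1) := by
          rcases hrel with ⟨_, hb⟩ | ⟨_, hb⟩ <;> rw [hb, he] <;> norm_num
        have harr : Arr n b (s₁ - 1) s₁ := ⟨ht1, by omega, hs₁, hs₁n, hbpos⟩
        have hacc := haw (s₁ - 1) s₁ harr
        rw [hds₁, hdt] at hacc
        norm_num at hacc
        have hws₁ : w s₁ = 0 := hwS s₁ le_rfl hs₁₂
        have ha0 : a (s₁ - 1) = 0 := by omega
        rw [ha0, he]
        have hm : max (-(b s₁ (s₁ - 1))) 0 = 0 := by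
          rcases hrel with ⟨_, hb⟩ | ⟨_, hb⟩ <;> rw [hb, he] <;> decide
        rw [hm]; ring
    · rw [if_neg hcr]
      have hs₁r : s₁ = r := by omega
      by_cases h2 : 2 ≤ s₁
      · rw [if_pos h2]
        have hvt := hv (s₁ - 1); have hwt := hw (s₁ - 1)
        rw [hd'' (s₁ - 1), if_neg (by omega : ¬(r ≤ s₁ - 1 ∧ s₁ - 1 ≤ n))] at hvt hwt
        have hvwt := hvw (s₁ - 1)
        have ha0 : a (s₁ - 1) = 0 := by omega
        rw [ha0]; ring
      · rw [if_neg h2]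
  -- right boundary
  have hR : s₂ < n → Int.sign (b s₂ (s₂ + 1)) * a (s₂ + 1)
      = -(2 * max (-(b s₂ (s₂ + 1))) 0) := by
    intro hlt
    obtain ⟨he, hrel⟩ := hpairs s₂ (by omega) (by omega)
    have hd2 : d'' s₂ = 1 := hd1 s₂ (by omega) (by omega)
    have hd3 : d'' (s₂ + 1) = 1 := hd1 (s₂ + 1) (by omega) (by omega)
    have hnr : a (s₂ + 1) ≠ 1 := by
      rcases hright with h | h
      · omega
      · exact h
    have hv2 := hv (s₂ + 1); have hw2 := hw (s₂ + 1)
    rw [hd3] at hv2 hw2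
    have hvw2 := hvw (s₂ + 1)
    rcases he with he | he
    · have harr : Arr n b (s₂ + 1) s₂ :=
        ⟨by omega, by omega, by omega, by omega, by rw [he]; norm_num⟩
      have hacc := haw (s₂ + 1) s₂ harr
      rw [hd2, hd3] at hacc
      norm_num at hacc
      have hws2 : w s₂ = 0 := hwS s₂ hs₁₂ le_rfl
      have ha0 : a (s₂ + 1) = 0 := by omega
      rw [ha0, he]; decide
    · have hbpos : 0 < b (s₂ + 1) s₂ := by
        rcases hrel with ⟨_, hb⟩ | ⟨_, hb⟩ <;> rw [hb, he] <;> norm_num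
      have harr : Arr n b s₂ (s₂ + 1) := ⟨by omega, by omega, by omega, by omega, hbpos⟩
      have hacc := hav s₂ (s₂ + 1) harr
      rw [hd2, hd3] at hacc
      norm_num at hacc
      have hvs2 : v s₂ = 1 := hv1 s₂ hs₁₂ le_rfl
      have ha2 : a (s₂ + 1) = 2 := by omega
      rw [ha2, he]; decide
  -- the form contribution
  have hXsum : formB n d b v a' - formB n d b a' w - formB n d b a' a'
      = ∑ k ∈ Finset.Icc 1 (n - 1),
          d * Int.sign (b k (k + 1)) * (a' (k + 1) * a k - a' k * a (k + 1)) := by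
    unfold formB
    rw [← Finset.sum_sub_distrib, ← Finset.sum_sub_distrib]
    have hmerge : ∀ i ∈ Finset.Icc 1 n,
        ((∑ j ∈ Finset.Icc 1 n, v i * a' j * (d * Int.sign (b i j)))
          - ∑ j ∈ Finset.Icc 1 n, a' i * w j * (d * Int.sign (b i j)))
          - (∑ j ∈ Finset.Icc 1 n, a' i * a' j * (d * Int.sign (b i j)))
        = ∑ j ∈ Finset.Icc 1 n,
            (v i * a' j - a' i * w j - a' i * a' j) * (d * Int.sign (b i j)) := by
      intro i _
      rw [← Finset.sum_sub_distrib, ← Finset.sum_sub_distrib]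
      exact Finset.sum_congr rfl fun j _ => by ring
    rw [Finset.sum_congr rfl hmerge]
    rw [sum_tridiag n _ (fun i hi j hj h1 h2 => by
      rw [Finset.mem_Icc] at hi hj
      rw [hb0 i hi.1 hi.2 j hj.1 hj.2 h1 h2, Int.sign_zero, mul_zero, mul_zero])]
    refine Finset.sum_congr rfl fun k hk => ?_
    rw [Finset.mem_Icc] at hk
    rw [hsgn k hk.1 (by omega)]
    have h1 := hvw k; have h2 := hvw (k + 1)
    linear_combination (d * Int.sign (b k (k + 1)) * a' (k + 1)) * h1
      - (d * Int.sign (b k (k + 1)) * a' k) * h2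
  have hXval : (∑ k ∈ Finset.Icc 1 (n - 1),
        d * Int.sign (b k (k + 1)) * (a' (k + 1) * a k - a' k * a (k + 1)))
      = (if 2 ≤ s₁ then d * (Int.sign (b (s₁ - 1) s₁) * a (s₁ - 1)) else 0)
        + (if s₂ < n then -(d * (Int.sign (b s₂ (s₂ + 1)) * a (s₂ + 1))) else 0) := by
    rw [sum_support_pair _ _ (s₁ - 1) s₂ (by omega)
      (fun k hk h1 h2 => by
        rw [Finset.mem_Icc] at hk
        by_cases hc : s₁ ≤ k ∧ k + 1 ≤ s₂
        · rw [ha' k, ha' (k + 1), if_pos (show s₁ ≤ k ∧ k ≤ s₂ by omega),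
            if_pos (show s₁ ≤ k + 1 ∧ k + 1 ≤ s₂ by omega),
            hS k (by omega) (by omega), hS (k + 1) (by omega) (by omega)]
          ring
        · rw [ha' k, ha' (k + 1), if_neg (show ¬(s₁ ≤ k ∧ k ≤ s₂) by omega),
            if_neg (show ¬(s₁ ≤ k + 1 ∧ k + 1 ≤ s₂) by omega)]
          ring)]
    congr 1
    · by_cases h2s : 2 ≤ s₁
      · rw [if_pos (show s₁ - 1 ∈ Finset.Icc 1 (n - 1) from by rw [Finset.mem_Icc]; omega),
          if_pos h2s]
        have ht2 : s₁ - 1 + 1 = s₁ := by omega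
        rw [ht2, ha' s₁, ha' (s₁ - 1), if_pos (show s₁ ≤ s₁ ∧ s₁ ≤ s₂ by omega),
          if_neg (show ¬(s₁ ≤ s₁ - 1 ∧ s₁ - 1 ≤ s₂) by omega)]
        ring
      · rw [if_neg (show s₁ - 1 ∉ Finset.Icc 1 (n - 1) from by rw [Finset.mem_Icc]; omega),
          if_neg h2s]
    · by_cases hlt : s₂ < n
      · rw [if_pos (show s₂ ∈ Finset.Icc 1 (n - 1) from by rw [Finset.mem_Icc]; omega),
          if_pos hlt, ha' s₂, ha' (s₂ + 1), if_pos (show s₁ ≤ s₂ ∧ s₂ ≤ s₂ by omega),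
          if_neg (show ¬(s₁ ≤ s₂ + 1 ∧ s₂ + 1 ≤ s₂) by omega)]
        ring
      · rw [if_neg (show s₂ ∉ Finset.Icc 1 (n - 1) from by rw [Finset.mem_Icc]; omega),
          if_neg hlt]
  -- linearity of the pieces
  have e1 : dot3 n (deltaB n) (gvec n b d'') (fun i => v i - a' i)
      = dot3 n (deltaB n) (gvec n b d'') v - dot3 n (deltaB n) (gvec n b d'') a' := by
    unfold dot3; rw [← Finset.sum_sub_distrib]
    exact Finset.sum_congr rfl fun i _ => by ring
  have e2 : dot3 n (deltaB n) (gvec n b d'') (fun i => w i + a' i)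
      = dot3 n (deltaB n) (gvec n b d'') w + dot3 n (deltaB n) (gvec n b d'') a' := by
    unfold dot3; rw [← Finset.sum_add_distrib]
    exact Finset.sum_congr rfl fun i _ => by ring
  have e3 : formB n d b (fun i => v i - a' i) (fun i => w i + a' i)
      = formB n d b v w + (formB n d b v a' - formB n d b a' w - formB n d b a' a') := by
    unfold formB
    rw [← Finset.sum_sub_distrib, ← Finset.sum_sub_distrib, ← Finset.sum_add_distrib]
    refine Finset.sum_congr rfl fun i _ => ?_
    rw [← Finset.sum_sub_distrib, ← Finset.sum_sub_distrib, ← Finset.sum_add_distrib]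
    exact Finset.sum_congr rfl fun j _ => by ring
  constructor
  · intro hlt
    have hGval : dot3 n (deltaB n) (gvec n b d'') a'
        = (if r + 1 ≤ s₁ then deltaB n s₁ * max (-(b s₁ (s₁ - 1))) 0 else 0)
          + (-2 + 2 * max (-(b s₂ (s₂ + 1))) 0) := by
      rw [hG1, hG2 s₂ hs₁₂ hs₂, if_neg (show ¬ s₂ = n by omega)]
    have hXv : formB n d b v a' - formB n d b a' w - formB n d b a' a'
        = d * dot3 n (deltaB n) (gvec n b d'') a' + 2 * d := by
      rw [hXsum, hXval, if_pos hlt, hR hlt, hGval,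
        show (if 2 ≤ s₁ then d * (Int.sign (b (s₁ - 1) s₁) * a (s₁ - 1)) else 0)
            = d * (if 2 ≤ s₁ then Int.sign (b (s₁ - 1) s₁) * a (s₁ - 1) else 0) from by
          rw [mul_ite, mul_zero],
        hL]
      ring
    have hcast := congrArg (fun z : ℤ => (z : ℚ)) hXv
    push_cast at hcast
    unfold psiB
    rw [e1, e2, e3]
    push_cast
    linear_combination hcast
  · intro heq
    have hGval : dot3 n (deltaB n) (gvec n b d'') a'
        = (if r + 1 ≤ s₁ then deltaB n s₁ * max (-(b s₁ (s₁ - 1))) 0 else 0) + (-1) := by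
      rw [hG1, hG2 s₂ hs₁₂ hs₂, if_pos heq]
    have hXv : formB n d b v a' - formB n d b a' w - formB n d b a' a'
        = d * dot3 n (deltaB n) (gvec n b d'') a' + d := by
      rw [hXsum, hXval, if_neg (show ¬ s₂ < n by omega), hGval,
        show (if 2 ≤ s₁ then d * (Int.sign (b (s₁ - 1) s₁) * a (s₁ - 1)) else 0)
            = d * (if 2 ≤ s₁ then Int.sign (b (s₁ - 1) s₁) * a (s₁ - 1) else 0) from by
          rw [mul_ite, mul_zero],
        hL]
      ring
    have hcast := congrArg (fun z : ℤ => (z : ℚ)) hXv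
    push_cast at hcast
    unfold psiB
    rw [e1, e2, e3]
    push_cast
    linear_combination hcast
end

section
/- Let B⁰ = (b⁰_{ij}) be an n×n skew-symmetric integer matrix with entries in {0, ±1} whose quiver Q⁰ (arrow i→j iff b⁰_{ji} > 0) is an acyclic orientation of the Dynkin diagram of type D_n (n ≥ 4). Let r ∈ {1,…,n−2} and define d'' = e_r+⋯+e_{n−1}, d''' = e_r+⋯+e_{n−2}+e_n if the arrows of Q⁰ between n−2 and n−1 and between n−2 and n point in the same direction, and d'' = e_r+⋯+e_{n−2}, d''' = e_r+⋯+e_n otherwise. Let d be a positive integer; define g_{d''} and g_{d'''} by g_c = −Σ_i c_i e_i + Σ_{i,j} c_i[−b⁰_{ji}]_+ e_j; let ⟨·,·⟩ be the bilinear form with ⟨e_i,e_j⟩ = (d/2)·b⁰_{ij}; and set ψ̃(v,w) = −(d/2)(g_{d''}·v) − (d/2)(g_{d'''}·w) − d(g_{d''}·w) + ⟨v,w⟩, where x·y denotes the standard dot product. Fix a ∈ ℤ^n, let S_a be the set of pairs (v,w) with v+w = a, 0 ≤ v ≤ d'', 0 ≤ w ≤ d''', and every arrow of Q⁰ acceptable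 with respect to (d'', v) and with respect to (d''', w); let S be the induced subgraph of Q⁰ on {i ∈ [r, n−2] : a_i = 1}, and let C(S) be the set of connected components of S, excluding the component containing n−2 if at least one of the arrows between n−2 and n−1 or between n−2 and n is critical with respect to (d''+d''', a). Let [s₁, s₂] ∈ C(S), let (v,w) ∈ S_a with v_i = 1 for all i ∈ [s₁, s₂], and set a' = Σ_{i=s₁}^{s₂} e_i. Then ψ̃(v − a', w + a') = ψ̃(v,w) + d. -/
set_option maxHeartbeats 1600000


/-- The arrow `i → j` is critical with respect to `(d, e)`. -/
def Critical (d e : ℕ → ℤ) (i j : ℕ) : Prop :=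
  (d i = 2 ∧ e i = 1 ∧ d j = 1 ∧ e j = 0) ∨ (d j = 2 ∧ e j = 1 ∧ d i = 1 ∧ e i = 1)

/-- The arrow between `x` and `y` (in whichever direction it exists) is critical
with respect to `(d, e)`. -/
def CritBetween (n : ℕ) (b : ℕ → ℕ → ℤ) (d e : ℕ → ℤ) (x y : ℕ) : Prop :=
  (Arr n b x y ∧ Critical d e x y) ∨ (Arr n b y x ∧ Critical d e y x)

/-- The standard dot product `x·y = Σ_i x_i y_i`. -/
def dot2 (n : ℕ) (x y : ℕ → ℤ) : ℤ := ∑ i ∈ Finset.Icc 1 n, x i * y i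

/-- The bilinear form with `⟨e_i, e_j⟩ = (d/2)·b_{ij}`. -/
def formD (n : ℕ) (d : ℤ) (b : ℕ → ℕ → ℤ) (v w : ℕ → ℤ) : ℚ :=
  ∑ i ∈ Finset.Icc 1 n, ∑ j ∈ Finset.Icc 1 n,
    (v i : ℚ) * (w j : ℚ) * (((d : ℚ) / 2) * (b i j : ℚ))

/-- `ψ̃(v,w) = −(d/2)(g''·v) − (d/2)(g'''·w) − d(g''·w) + ⟨v,w⟩`. -/
def psiD (n : ℕ) (d : ℤ) (b : ℕ → ℕ → ℤ) (g'' g''' : ℕ → ℤ) (v w : ℕ → ℤ) : ℚ :=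
  -((d : ℚ) / 2) * (dot2 n g'' v : ℚ) - ((d : ℚ) / 2) * (dot2 n g''' w : ℚ) -
    (d : ℚ) * (dot2 n g'' w : ℚ) + formD n d b v w

/-- Type `D_n`: the effect on `ψ̃` of moving a component `[s₁, s₂] ∈ C(S)` from `v`
to `w`:  `ψ̃(v − a', w + a') = ψ̃(v, w) + d`. -/
theorem stmt_17 (n : ℕ) (hn : 4 ≤ n) (b : ℕ → ℕ → ℤ)
    (hskew : ∀ i, 1 ≤ i → i ≤ n → ∀ j, 1 ≤ j → j ≤ n → b j i = -b i j)
    (hentries : ∀ i, 1 ≤ i → i ≤ n → ∀ j, 1 ≤ j → j ≤ n →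
      b i j = 0 ∨ b i j = 1 ∨ b i j = -1)
    (hsupp : ∀ i, 1 ≤ i → i ≤ n → ∀ j, 1 ≤ j → j ≤ n →
      (b i j ≠ 0 ↔ ((j = i + 1 ∧ 1 ≤ i ∧ i ≤ n - 2) ∨ (i = j + 1 ∧ 1 ≤ j ∧ j ≤ n - 2) ∨
        (i = n - 2 ∧ j = n) ∨ (i = n ∧ j = n - 2))))
    (hacyc : ∀ i, ¬ Relation.TransGen (Arr n b) i i)
    (r : ℕ) (hr : 1 ≤ r) (hrn : r ≤ n - 2)
    (d : ℤ) (hd : 0 < d)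
    (d'' d''' : ℕ → ℤ)
    (hsame : ((Arr n b (n - 2) (n - 1) ∧ Arr n b (n - 2) n) ∨
        (Arr n b (n - 1) (n - 2) ∧ Arr n b n (n - 2))) →
      (∀ i, d'' i = if r ≤ i ∧ i ≤ n - 1 then 1 else 0) ∧
      (∀ i, d''' i = if (r ≤ i ∧ i ≤ n - 2) ∨ i = n then 1 else 0))
    (hdiff : ¬((Arr n b (n - 2) (n - 1) ∧ Arr n b (n - 2) n) ∨
        (Arr n b (n - 1) (n - 2) ∧ Arr n b n (n - 2))) →
      (∀ i, d'' i = if r ≤ i ∧ i ≤ n - 2 then 1 else 0) ∧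
      (∀ i, d''' i = if r ≤ i ∧ i ≤ n then 1 else 0))
    (a v w : ℕ → ℤ)
    (hvw : ∀ i, v i + w i = a i)
    (hv : ∀ i, 0 ≤ v i ∧ v i ≤ d'' i) (hw : ∀ i, 0 ≤ w i ∧ w i ≤ d''' i)
    (hav : AcceptableAll n b d'' v) (haw : AcceptableAll n b d''' w)
    (s₁ s₂ : ℕ) (hs₁ : r ≤ s₁) (hs₁₂ : s₁ ≤ s₂) (hs₂ : s₂ ≤ n - 2)
    (hS : ∀ i, s₁ ≤ i → i ≤ s₂ → a i = 1)
    (hleft : s₁ = r ∨ a (s₁ - 1) ≠ 1)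
    (hright : s₂ = n - 2 ∨ a (s₂ + 1) ≠ 1)
    (hexcl : (CritBetween n b (fun i => d'' i + d''' i) a (n - 2) (n - 1) ∨
        CritBetween n b (fun i => d'' i + d''' i) a (n - 2) n) → s₂ ≠ n - 2)
    (hv1 : ∀ i, s₁ ≤ i → i ≤ s₂ → v i = 1)
    (a' : ℕ → ℤ) (ha' : ∀ i, a' i = if s₁ ≤ i ∧ i ≤ s₂ then 1 else 0) :
    psiD n d b (gvec n b d'') (gvec n b d''')
        (fun i => v i - a' i) (fun i => w i + a' i) =
      psiD n d b (gvec n b d'') (gvec n b d''') v w + (d : ℚ) := by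
  classical
  set h : ℕ → ℕ → ℤ := fun j i => -(a i) * b j i - (d'' i + d''' i) * max (-(b j i)) 0 with hH
  have hmaxP : max (-(1:ℤ)) 0 = 0 := max_eq_right (by norm_num)
  have hmaxN : max (-(-1:ℤ)) 0 = 1 := by rw [neg_neg]; exact max_eq_left one_pos.le
  have hmax0 : max (-(0:ℤ)) 0 = 0 := by rw [neg_zero]; exact max_self 0
  -- values of d'' and d'''
  have hdd : (∀ i, r ≤ i → i ≤ n - 2 → d'' i = 1 ∧ d''' i = 1) ∧
      (∀ i, i < r → d'' i = 0 ∧ d''' i = 0) ∧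
      (d'' (n-1) + d''' (n-1) = 1) ∧ (d'' n + d''' n = 1) := by
    by_cases hP : ((Arr n b (n - 2) (n - 1) ∧ Arr n b (n - 2) n) ∨
        (Arr n b (n - 1) (n - 2) ∧ Arr n b n (n - 2)))
    · obtain ⟨h2, h3⟩ := hsame hP
      refine ⟨fun i e1 e2 => ⟨?_, ?_⟩, fun i e1 => ⟨?_, ?_⟩, ?_, ?_⟩
      · rw [h2 i, if_pos (by omega)]
      · rw [h3 i, if_pos (by omega)]
      · rw [h2 i, if_neg (by omega)]
      · rw [h3 i, if_neg (by omega)]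
      · rw [h2 (n-1), h3 (n-1), if_pos (by omega), if_neg (by omega)]; ring
      · rw [h2 n, h3 n, if_neg (by omega), if_pos (by omega)]; ring
    · obtain ⟨h2, h3⟩ := hdiff hP
      refine ⟨fun i e1 e2 => ⟨?_, ?_⟩, fun i e1 => ⟨?_, ?_⟩, ?_, ?_⟩
      · rw [h2 i, if_pos (by omega)]
      · rw [h3 i, if_pos (by omega)]
      · rw [h2 i, if_neg (by omega)]
      · rw [h3 i, if_neg (by omega)]
      · rw [h2 (n-1), h3 (n-1), if_neg (by omega), if_pos (by omega)]; ring
      · rw [h2 n, h3 n, if_neg (by omega), if_pos (by omega)]; ring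
  have hc2 : ∀ i, r ≤ i → i ≤ n - 2 → d'' i + d''' i = 2 := fun i e1 e2 => by
    have := hdd.1 i e1 e2; omega
  have hbval : ∀ i, 1 ≤ i → i ≤ n → ∀ j, 1 ≤ j → j ≤ n →
      b j i = 0 ∨ b j i = 1 ∨ b j i = -1 := fun i e1 e2 j e3 e4 => hentries j e3 e4 i e1 e2
  have hwj : ∀ j, s₁ ≤ j → j ≤ s₂ → w j = 0 := fun j e1 e2 => by
    have := hvw j; have := hv1 j e1 e2; have := hS j e1 e2; omega
  -- boundary middle lemma : a k ≠ 1 on the middle segment forces h j k = 0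
  have hmid : ∀ j, s₁ ≤ j → j ≤ s₂ → ∀ k, r ≤ k → k ≤ n - 2 → a k ≠ 1 → h j k = 0 := by
    intro j hj1 hj2 k hk1 hk2 hk3
    have hj1' : 1 ≤ j := by omega
    have hjn : j ≤ n := by omega
    have hk1' : 1 ≤ k := by omega
    have hkn : k ≤ n := by omega
    obtain ⟨hd2k, hd3k⟩ := hdd.1 k hk1 hk2
    obtain ⟨hd2j, hd3j⟩ := hdd.1 j (le_trans hs₁ hj1) (le_trans hj2 hs₂)
    have hvk1 := (hv k).1; have hvk2 := (hv k).2
    have hwk1 := (hw k).1; have hwk2 := (hw k).2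
    rw [hd2k] at hvk2; rw [hd3k] at hwk2
    have hvj := hv1 j hj1 hj2
    have hwj' := hwj j hj1 hj2
    have hak2 := hvw k
    rcases hbval k hk1' hkn j hj1' hjn with h0 | h1 | hm1
    · simp [hH, h0]
    · have hak : a k = 0 := by
        by_contra hne
        have hwk' : w k = 1 := by omega
        have harr : Arr n b k j := ⟨hk1', hkn, hj1', hjn, by rw [h1]; norm_num⟩
        have hA := haw k j harr
        rw [hd3k, hd3j] at hA
        norm_num at hA
        omega
      simp only [hH]; rw [h1, hmaxP, hak]; ring
    · have hak : a k = 2 := by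
        by_contra hne
        have hvk' : v k = 0 := by omega
        have harr : Arr n b j k := ⟨hj1', hjn, hk1', hkn, by
          rw [hskew j hj1' hjn k hk1' hkn, hm1]; norm_num⟩
        have hA := hav j k harr
        rw [hd2j, hd2k] at hA
        norm_num at hA
        omega
      simp only [hH]; rw [hm1, hmaxN, hak, hd2k, hd3k]; ring
  -- boundary end lemma : for k ∈ {n-1, n} when s₂ = n-2
  have hend : ∀ k, (k = n - 1 ∨ k = n) → s₂ = n - 2 → h (n-2) k = 0 := by
    intro k hk hs2
    have hck : d'' k + d''' k = 1 := by
      rcases hk with rfl | rfl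
      · exact hdd.2.2.1
      · exact hdd.2.2.2
    have hk1 : 1 ≤ k := by omega
    have hkn : k ≤ n := by omega
    have hj1 : (1:ℕ) ≤ n - 2 := by omega
    have hjn : n - 2 ≤ n := by omega
    have haj2 : a (n-2) = 1 := hS _ (by omega) (by omega)
    have hcj : d'' (n-2) + d''' (n-2) = 2 := hc2 _ (by omega) (by omega)
    have hak01 : a k = 0 ∨ a k = 1 := by
      have e1 := (hv k).1; have e2 := (hv k).2
      have e3 := (hw k).1; have e4 := (hw k).2
      have e5 := hvw k
      omega
    rcases hbval k hk1 hkn (n-2) hj1 hjn with h0 | h1 | hm1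
    · simp [hH, h0]
    · have hak : a k = 0 := by
        rcases hak01 with h' | h'
        · exact h'
        · exfalso
          have harr : Arr n b k (n-2) := ⟨hk1, hkn, hj1, hjn, by rw [h1]; norm_num⟩
          have hCB : CritBetween n b (fun i => d'' i + d''' i) a (n-2) k := by
            unfold CritBetween Critical
            exact Or.inr ⟨harr, Or.inr ⟨hcj, haj2, hck, h'⟩⟩
          rcases hk with rfl | rfl
          · exact hexcl (Or.inl hCB) hs2
          · exact hexcl (Or.inr hCB) hs2
      simp only [hH]; rw [h1, hmaxP, hak]; ring
    · have hak : a k = 1 := by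
        rcases hak01 with h' | h'
        · exfalso
          have harr : Arr n b (n-2) k := ⟨hj1, hjn, hk1, hkn, by
            rw [hskew (n-2) hj1 hjn k hk1 hkn, hm1]; norm_num⟩
          have hCB : CritBetween n b (fun i => d'' i + d''' i) a (n-2) k := by
            unfold CritBetween Critical
            exact Or.inl ⟨harr, Or.inl ⟨hcj, haj2, hck, h'⟩⟩
          rcases hk with rfl | rfl
          · exact hexcl (Or.inl hCB) hs2
          · exact hexcl (Or.inr hCB) hs2
        · exact h'
      simp only [hH]; rw [hm1, hmaxN, hak, hck]; ring
  -- internal edges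
  have hint : ∀ j, s₁ ≤ j → j ≤ s₂ → ∀ k, s₁ ≤ k → k ≤ s₂ → b j k ≠ 0 → h j k = -1 := by
    intro j hj1 hj2 k hk1 hk2 hbne
    have hak := hS k hk1 hk2
    have hck := hc2 k (le_trans hs₁ hk1) (le_trans hk2 hs₂)
    rcases hbval k (by omega) (by omega) j (by omega) (by omega) with h0 | h1 | hm1
    · exact absurd h0 hbne
    · simp only [hH]; rw [h1, hmaxP, hak]; ring
    · simp only [hH]; rw [hm1, hmaxN, hak, hck]; ring
  have hbne_right : ∀ j, 1 ≤ j → j + 1 ≤ n - 2 → b j (j+1) ≠ 0 := fun j e1 e2 =>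
    (hsupp j e1 (by omega) (j+1) (by omega) (by omega)).mpr (Or.inl ⟨rfl, e1, by omega⟩)
  have hbne_left : ∀ j, 2 ≤ j → j ≤ n - 2 → b j (j-1) ≠ 0 := fun j e1 e2 =>
    (hsupp j (by omega) (by omega) (j-1) (by omega) (by omega)).mpr
      (Or.inr (Or.inl ⟨by omega, by omega, by omega⟩))
  -- decomposition of the row sum of h into neighbour contributions
  have hsum : ∀ j, s₁ ≤ j → j ≤ s₂ →
      ∑ i ∈ Finset.Icc 1 n, h j i =
        (if 2 ≤ j then h j (j-1) else 0) + h j (j+1) + (if j = n-2 then h j n else 0) := by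
    intro j hj1 hj2
    have hj1' : 1 ≤ j := by omega
    have hjn2 : j ≤ n - 2 := le_trans hj2 hs₂
    have step : ∀ i ∈ Finset.Icc 1 n, h j i =
        (if i + 1 = j then h j i else 0) + (if i = j + 1 then h j i else 0) +
          (if j = n - 2 ∧ i = n then h j i else 0) := by
      intro i hi
      rw [Finset.mem_Icc] at hi
      by_cases e1 : i + 1 = j
      · rw [if_pos e1, if_neg (by omega), if_neg (by omega)]; ring
      · by_cases e2 : i = j + 1
        · rw [if_neg e1, if_pos e2, if_neg (by omega)]; ring
        · by_cases e3 : j = n - 2 ∧ i = n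
          · rw [if_neg e1, if_neg e2, if_pos e3]; ring
          · rw [if_neg e1, if_neg e2, if_neg e3]
            have hb0 : b j i = 0 := by
              by_contra hb
              rcases (hsupp j (by omega) (by omega) i (by omega) (by omega)).mp hb with
                ⟨f1, f2, f3⟩ | ⟨f1, f2, f3⟩ | ⟨f1, f2⟩ | ⟨f1, f2⟩ <;> omega
            simp [hH, hb0]
    rw [Finset.sum_congr rfl step, Finset.sum_add_distrib, Finset.sum_add_distrib]
    congr 1
    · congr 1
      · by_cases e2 : 2 ≤ j
        · rw [if_pos e2]
          have e3 : ∀ i ∈ Finset.Icc 1 n, (if i + 1 = j then h j i else 0)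
              = (if i = j - 1 then h j i else 0) := by
            intro i hi
            have : (i + 1 = j) ↔ (i = j - 1) := by omega
            simp only [this]
          rw [Finset.sum_congr rfl e3, Finset.sum_ite_eq' (Finset.Icc 1 n) (j-1) (h j),
            if_pos (by rw [Finset.mem_Icc]; omega)]
        · rw [if_neg e2]
          apply Finset.sum_eq_zero
          intro i hi
          rw [Finset.mem_Icc] at hi
          rw [if_neg (by omega)]
      · rw [Finset.sum_ite_eq' (Finset.Icc 1 n) (j+1) (h j),
          if_pos (by rw [Finset.mem_Icc]; omega)]
    · by_cases e3 : j = n - 2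
      · rw [if_pos e3]
        have e4 : ∀ i ∈ Finset.Icc 1 n, (if j = n - 2 ∧ i = n then h j i else 0)
            = (if i = n then h j i else 0) := by intro i _; simp [e3]
        rw [Finset.sum_congr rfl e4, Finset.sum_ite_eq' (Finset.Icc 1 n) n (h j),
          if_pos (by rw [Finset.mem_Icc]; omega)]
      · rw [if_neg e3]
        apply Finset.sum_eq_zero
        intro i _
        rw [if_neg (by tauto)]
  -- the main per-vertex computation
  have hF : ∀ j, s₁ ≤ j → j ≤ s₂ →
      (d'' j + d''' j) + ∑ i ∈ Finset.Icc 1 n, h j i =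
        (if j = s₁ then 1 else 0) + (if j = s₂ then 1 else 0) := by
    intro j hj1 hj2
    rw [hsum j hj1 hj2, hc2 j (le_trans hs₁ hj1) (le_trans hj2 hs₂)]
    have hT1 : (if 2 ≤ j then h j (j-1) else 0) = if j = s₁ then 0 else -1 := by
      by_cases e1 : j = s₁
      · subst e1
        rw [if_pos rfl]
        by_cases e2 : 2 ≤ j
        · rw [if_pos e2]
          by_cases e3 : j = r
          · -- k = j - 1 < r : everything vanishes there
            have hk1 : j - 1 < r := by omega
            obtain ⟨hd2, hd3⟩ := hdd.2.1 _ hk1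
            have hva : v (j-1) = 0 := by
              have f1 := (hv (j-1)).1; have f2 := (hv (j-1)).2; rw [hd2] at f2; omega
            have hwa : w (j-1) = 0 := by
              have f1 := (hw (j-1)).1; have f2 := (hw (j-1)).2; rw [hd3] at f2; omega
            have ha0 : a (j-1) = 0 := by have := hvw (j-1); omega
            rcases hbval (j-1) (by omega) (by omega) j (by omega) (by omega) with
              h0 | h0 | h0 <;> (simp only [hH]; rw [h0, ha0, hd2, hd3]) <;>
              [rw [hmax0]; rw [hmaxP]; rw [hmaxN]] <;> ring
          · have hrr : a (j - 1) ≠ 1 := by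
              rcases hleft with h' | h'
              · exact absurd h' e3
              · exact h'
            exact hmid j le_rfl hj2 (j-1) (by omega) (by omega) hrr
        · rw [if_neg e2]
      · rw [if_neg e1, if_pos (show 2 ≤ j by omega)]
        exact hint j hj1 hj2 (j-1) (by omega) (by omega) (hbne_left j (by omega) (by omega))
    have hT2 : h j (j+1) + (if j = n-2 then h j n else 0) = if j = s₂ then 0 else -1 := by
      by_cases e2 : j = s₂
      · subst e2
        rw [if_pos rfl]
        by_cases e3 : j = n - 2
        · rw [if_pos e3]
          have f1 : h j (j+1) = 0 := by
            rw [e3, show n - 2 + 1 = n - 1 by omega]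
            exact hend (n-1) (Or.inl rfl) e3
          have f2 : h j n = 0 := by rw [e3]; exact hend n (Or.inr rfl) e3
          rw [f1, f2]; ring
        · rw [if_neg e3]
          have hrr : a (j + 1) ≠ 1 := by
            rcases hright with h' | h'
            · exact absurd h' e3
            · exact h'
          rw [hmid j hj1 le_rfl (j+1) (by omega) (by omega) hrr]; ring
      · rw [if_neg e2, if_neg (show ¬ j = n - 2 by omega)]
        rw [hint j hj1 hj2 (j+1) (by omega) (by omega) (hbne_right j (by omega) (by omega))]
        ring
    rw [add_assoc, hT1, hT2]
    split_ifs <;> ring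
  -- the key integer identity
  have hKEY : (∑ i ∈ Finset.Icc 1 n, ∑ j ∈ Finset.Icc 1 n, a i * a' j * b i j) -
      (∑ j ∈ Finset.Icc 1 n, (gvec n b d'' j + gvec n b d''' j) * a' j) = 2 := by
    rw [Finset.sum_comm, ← Finset.sum_sub_distrib]
    have e1 : ∀ j ∈ Finset.Icc 1 n,
        (∑ i ∈ Finset.Icc 1 n, a i * a' j * b i j) -
          (gvec n b d'' j + gvec n b d''' j) * a' j =
        a' j * ((d'' j + d''' j) + ∑ i ∈ Finset.Icc 1 n, h j i) := by
      intro j hj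
      rw [Finset.mem_Icc] at hj
      have e2 : ∀ i ∈ Finset.Icc 1 n, a i * a' j * b i j = a' j * (-(a i) * b j i) := by
        intro i hi
        rw [Finset.mem_Icc] at hi
        rw [hskew j hj.1 hj.2 i hi.1 hi.2]
        ring
      rw [Finset.sum_congr rfl e2, ← Finset.mul_sum]
      have e3 : ∑ i ∈ Finset.Icc 1 n, h j i =
          (∑ i ∈ Finset.Icc 1 n, -(a i) * b j i) -
            ((∑ i ∈ Finset.Icc 1 n, d'' i * max (-(b j i)) 0) +
              (∑ i ∈ Finset.Icc 1 n, d''' i * max (-(b j i)) 0)) := by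
        rw [← Finset.sum_add_distrib, ← Finset.sum_sub_distrib]
        refine Finset.sum_congr rfl fun i _ => ?_
        simp only [hH]; ring
      rw [e3]
      unfold gvec
      ring
    rw [Finset.sum_congr rfl e1]
    have hsub : Finset.Icc s₁ s₂ ⊆ Finset.Icc 1 n := by
      intro x hx
      rw [Finset.mem_Icc] at *
      omega
    rw [← Finset.sum_subset hsub (fun x hx hx' => by
      rw [Finset.mem_Icc] at hx'
      rw [ha' x, if_neg (by omega)]
      ring)]
    have e4 : ∀ j ∈ Finset.Icc s₁ s₂,
        a' j * ((d'' j + d''' j) + ∑ i ∈ Finset.Icc 1 n, h j i) =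
          (if j = s₁ then 1 else 0) + (if j = s₂ then 1 else 0) := by
      intro j hj
      rw [Finset.mem_Icc] at hj
      rw [ha' j, if_pos ⟨hj.1, hj.2⟩, one_mul, hF j hj.1 hj.2]
    rw [Finset.sum_congr rfl e4, Finset.sum_add_distrib,
      Finset.sum_ite_eq' (Finset.Icc s₁ s₂) s₁ (fun _ => (1:ℤ)),
      Finset.sum_ite_eq' (Finset.Icc s₁ s₂) s₂ (fun _ => (1:ℤ)),
      if_pos (by rw [Finset.mem_Icc]; omega), if_pos (by rw [Finset.mem_Icc]; omega)]
    norm_num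
  -- rational-side algebra
  have hd2v : dot2 n (gvec n b d'') (fun i => v i - a' i) =
      dot2 n (gvec n b d'') v - dot2 n (gvec n b d'') a' := by
    unfold dot2; rw [← Finset.sum_sub_distrib]; exact Finset.sum_congr rfl fun i _ => by ring
  have hd3w : dot2 n (gvec n b d''') (fun i => w i + a' i) =
      dot2 n (gvec n b d''') w + dot2 n (gvec n b d''') a' := by
    unfold dot2; rw [← Finset.sum_add_distrib]; exact Finset.sum_congr rfl fun i _ => by ring
  have hd2w : dot2 n (gvec n b d'') (fun i => w i + a' i) =
      dot2 n (gvec n b d'') w + dot2 n (gvec n b d'') a' := by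
    unfold dot2; rw [← Finset.sum_add_distrib]; exact Finset.sum_congr rfl fun i _ => by ring
  have hskewF : ∀ x y : ℕ → ℤ, formD n d b x y = - formD n d b y x := by
    intro x y
    unfold formD
    rw [Finset.sum_comm]
    simp only [← Finset.sum_neg_distrib]
    refine Finset.sum_congr rfl fun k hk => Finset.sum_congr rfl fun l hl => ?_
    rw [Finset.mem_Icc] at hk hl
    rw [hskew k hk.1 hk.2 l hl.1 hl.2]
    push_cast
    ring
  have hza : formD n d b a' a' = 0 := by
    have := hskewF a' a'
    linarith
  have hbil : formD n d b (fun i => v i - a' i) (fun i => w i + a' i) =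
      formD n d b v w + formD n d b v a' - formD n d b a' w - formD n d b a' a' := by
    unfold formD
    rw [← Finset.sum_add_distrib, ← Finset.sum_sub_distrib, ← Finset.sum_sub_distrib]
    refine Finset.sum_congr rfl fun i _ => ?_
    rw [← Finset.sum_add_distrib, ← Finset.sum_sub_distrib, ← Finset.sum_sub_distrib]
    refine Finset.sum_congr rfl fun j _ => ?_
    push_cast
    ring
  have hsplit2 : formD n d b v a' + formD n d b w a' = formD n d b a a' := by
    unfold formD
    rw [← Finset.sum_add_distrib]
    refine Finset.sum_congr rfl fun i _ => ?_
    rw [← Finset.sum_add_distrib]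
    refine Finset.sum_congr rfl fun j _ => ?_
    rw [show (a i : ℚ) = (v i : ℚ) + (w i : ℚ) by exact_mod_cast (hvw i).symm]
    ring
  have hformaa : formD n d b a a' =
      (d : ℚ)/2 * ((∑ i ∈ Finset.Icc 1 n, ∑ j ∈ Finset.Icc 1 n, a i * a' j * b i j : ℤ) : ℚ) := by
    unfold formD
    push_cast
    rw [Finset.mul_sum]
    refine Finset.sum_congr rfl fun i _ => ?_
    rw [Finset.mul_sum]
    refine Finset.sum_congr rfl fun j _ => ?_
    ring
  have hdotadd : ∑ j ∈ Finset.Icc 1 n, (gvec n b d'' j + gvec n b d''' j) * a' j =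
      dot2 n (gvec n b d'') a' + dot2 n (gvec n b d''') a' := by
    unfold dot2
    rw [← Finset.sum_add_distrib]
    exact Finset.sum_congr rfl fun j _ => by ring
  have hDS : (∑ i ∈ Finset.Icc 1 n, ∑ j ∈ Finset.Icc 1 n, a i * a' j * b i j) =
      2 + dot2 n (gvec n b d'') a' + dot2 n (gvec n b d''') a' := by
    rw [hdotadd] at hKEY
    linarith
  have hfinal : formD n d b v a' + formD n d b w a' =
      (d : ℚ)/2 * (2 + ((dot2 n (gvec n b d'') a' : ℤ) : ℚ) +
        ((dot2 n (gvec n b d''') a' : ℤ) : ℚ)) := by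
    rw [hsplit2, hformaa, hDS]
    push_cast
    ring
  unfold psiD
  rw [hd2v, hd3w, hd2w, hbil, hskewF a' w, hza]
  push_cast
  linear_combination hfinal
end
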